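/- arXiv:math/0403115 — 2 statements merged into one kernel-verified Lean document; each statement's English description precedes it below -/
import Mathlib

section
/- The map x ↦ ‖x‖ := max_{i=1,...,m} (i! |xⁱ|)^{1/i} on T̃⁽ᵐ⁾(V) is a subadditive homogeneous norm: ‖x‖ = 0 iff x = 1; ‖δ_t x‖ = |t| ‖x‖ for all t ∈ ℝ; and ‖x ⊗ y‖ ≤ ‖x‖ + ‖y‖ for all x, y ∈ T̃⁽ᵐ⁾(V). -/
open scoped BigOperators NNReal

/-- The `i`-th graded component of `x`, in the ambient algebra `A` which models the
truncated tensor algebra `T⁽ᵐ⁾(V)`. -/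
noncomputable def gcomp {A : Type*} [NormedRing A] [NormedAlgebra ℝ A]
    (𝒜 : ℕ → Submodule ℝ A) [GradedAlgebra 𝒜] (x : A) (i : ℕ) : A :=
  (DirectSum.decompose 𝒜 x i : A)

/-- The homogeneous norm `‖x‖ = max_{i=1..m} (i!|xⁱ|)^{1/i}`. -/
noncomputable def hnorm {A : Type*} [NormedRing A] [NormedAlgebra ℝ A]
    (𝒜 : ℕ → Submodule ℝ A) [GradedAlgebra 𝒜] (m : ℕ) (x : A) : ℝ :=
  (((Finset.Icc 1 m).sup fun i =>
    ((i.factorial : ℝ≥0) * ‖gcomp 𝒜 x i‖₊) ^ ((i : ℝ)⁻¹) : ℝ≥0) : ℝ)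

/-- The dilation `δ_t x = 1 + t x¹ + ⋯ + tᵐ xᵐ`. -/
noncomputable def dil {A : Type*} [NormedRing A] [NormedAlgebra ℝ A]
    (𝒜 : ℕ → Submodule ℝ A) [GradedAlgebra 𝒜] (m : ℕ) (t : ℝ) (x : A) : A :=
  ∑ i ∈ Finset.range (m + 1), t ^ i • gcomp 𝒜 x i

/-! The bound `i! |xⁱ| ≤ ‖x‖ⁱ` for `1 ≤ i ≤ m` characterises `‖x‖` as the least such constant.
Since `(x ⊗ y)ⁱ = ∑_{j+k=i} xʲ ⊗ yᵏ` with `x⁰ = y⁰ = 1`, submultiplicativity and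
`i! = (i choose j) j! k!` give `i! |(x ⊗ y)ⁱ| ≤ ∑_{j+k=i} (i choose j) ‖x‖ʲ ‖y‖ᵏ = (‖x‖ + ‖y‖)ⁱ`.
The dilation multiplies the `i`-th term by `|t|ⁱ`, so its `i`-th root by `|t|`. -/

open Finset Nat

section GradedComponents

variable {A : Type*} [NormedRing A] [NormedAlgebra ℝ A] (𝒜 : ℕ → Submodule ℝ A) [GradedAlgebra 𝒜]

lemma gcomp_eq_proj (x : A) (i : ℕ) : gcomp 𝒜 x i = GradedAlgebra.proj 𝒜 i x := rfl

lemma gcomp_mem (x : A) (i : ℕ) : gcomp 𝒜 x i ∈ 𝒜 i := (DirectSum.decompose 𝒜 x i).2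

lemma gcomp_of_mem {a : A} {j : ℕ} (ha : a ∈ 𝒜 j) (i : ℕ) :
    gcomp 𝒜 a i = if i = j then a else 0 := by
  by_cases hij : i = j
  · subst hij; simp [gcomp, DirectSum.decompose_of_mem_same 𝒜 ha]
  · simp [gcomp, DirectSum.decompose_of_mem_ne 𝒜 ha (Ne.symm hij), hij]

lemma gcomp_one (i : ℕ) : gcomp 𝒜 1 i = if i = 0 then 1 else 0 :=
  gcomp_of_mem 𝒜 SetLike.GradedOne.one_mem i

lemma gcomp_mul (x y : A) (i : ℕ) :
    gcomp 𝒜 (x * y) i = ∑ p ∈ antidiagonal i, gcomp 𝒜 x p.1 * gcomp 𝒜 y p.2 := by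
  rw [gcomp, DirectSum.decompose_mul, DirectSum.coe_mul_apply_eq_sum_antidiagonal]
  rfl

lemma ext_gcomp {x y : A} (h : ∀ i, gcomp 𝒜 x i = gcomp 𝒜 y i) : x = y :=
  (DirectSum.decompose 𝒜).injective <| DirectSum.ext fun i => Subtype.ext (h i)

lemma gcomp_eq_zero_of_bot {i : ℕ} (hi : 𝒜 i = ⊥) (x : A) : gcomp 𝒜 x i = 0 := by
  simpa [hi] using gcomp_mem 𝒜 x i

lemma gcomp_dil {m : ℕ} (t : ℝ) (x : A) {i : ℕ} (hi : i ≤ m) :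
    gcomp 𝒜 (dil 𝒜 m t x) i = t ^ i • gcomp 𝒜 x i := by
  have hterm (j : ℕ) : gcomp 𝒜 (t ^ j • gcomp 𝒜 x j) i = if i = j then t ^ j • gcomp 𝒜 x j else 0 :=
    gcomp_of_mem 𝒜 (Submodule.smul_mem _ _ (gcomp_mem 𝒜 x j)) i
  rw [dil, gcomp_eq_proj, map_sum]
  simp only [← gcomp_eq_proj, hterm, sum_ite_eq, mem_range, Nat.lt_succ_of_le hi, if_true]

lemma eq_one_iff_gcomp_eq_zero {m : ℕ} (htrunc : ∀ i, m < i → 𝒜 i = ⊥) {x : A}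
    (hx : gcomp 𝒜 x 0 = 1) : x = 1 ↔ ∀ i ∈ Icc 1 m, gcomp 𝒜 x i = 0 := by
  constructor
  · rintro rfl i hi
    rw [gcomp_one, if_neg (by have := (mem_Icc.1 hi).1; omega)]
  · intro h
    refine ext_gcomp 𝒜 fun i => ?_
    rw [gcomp_one]
    rcases Nat.eq_zero_or_pos i with rfl | hi
    · rw [hx, if_pos rfl]
    rw [if_neg hi.ne']
    by_cases him : i ≤ m
    · exact h i (mem_Icc.2 ⟨hi, him⟩)
    · exact gcomp_eq_zero_of_bot 𝒜 (htrunc i (by omega)) x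

end GradedComponents

section HomogeneousNorm

variable {A : Type*} [NormedRing A] [NormedAlgebra ℝ A] {𝒜 : ℕ → Submodule ℝ A} [GradedAlgebra 𝒜]
  {m : ℕ}

variable (𝒜 m) in
noncomputable def nnhnorm (x : A) : ℝ≥0 :=
  (Icc 1 m).sup fun i => ((i ! : ℝ≥0) * ‖gcomp 𝒜 x i‖₊) ^ ((i : ℝ)⁻¹)

lemma coe_nnhnorm (x : A) : (nnhnorm 𝒜 m x : ℝ) = hnorm 𝒜 m x := rfl

lemma nnhnorm_le_iff {x : A} {c : ℝ≥0} :
    nnhnorm 𝒜 m x ≤ c ↔ ∀ i ∈ Icc 1 m, (i ! : ℝ≥0) * ‖gcomp 𝒜 x i‖₊ ≤ c ^ i := by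
  refine Finset.sup_le_iff.trans <| forall₂_congr fun i hi => ?_
  have hi0 : (0 : ℝ) < i := Nat.cast_pos.2 (mem_Icc.1 hi).1
  rw [NNReal.rpow_inv_le_iff hi0, NNReal.rpow_natCast]

lemma factorial_mul_nnnorm_gcomp_le (x : A) {i : ℕ} (hi : 1 ≤ i) (him : i ≤ m) :
    (i ! : ℝ≥0) * ‖gcomp 𝒜 x i‖₊ ≤ nnhnorm 𝒜 m x ^ i :=
  nnhnorm_le_iff.1 le_rfl i (mem_Icc.2 ⟨hi, him⟩)

lemma nnhnorm_eq_zero_iff {x : A} : nnhnorm 𝒜 m x = 0 ↔ ∀ i ∈ Icc 1 m, gcomp 𝒜 x i = 0 := by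
  rw [← nonpos_iff_eq_zero, nnhnorm_le_iff]
  refine forall₂_congr fun i hi => ?_
  rw [zero_pow (by have := (mem_Icc.1 hi).1; omega), nonpos_iff_eq_zero]
  simp [i.factorial_ne_zero]

lemma nnhnorm_dil (t : ℝ) (x : A) : nnhnorm 𝒜 m (dil 𝒜 m t x) = ‖t‖₊ * nnhnorm 𝒜 m x := by
  rw [nnhnorm, nnhnorm, NNReal.mul_finset_sup]
  refine sup_congr rfl fun i hi => ?_
  obtain ⟨hi, him⟩ := mem_Icc.1 hi
  have hi0 : (i : ℝ) ≠ 0 := Nat.cast_ne_zero.2 (by omega)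
  rw [gcomp_dil 𝒜 t x him, nnnorm_smul, nnnorm_pow, mul_left_comm, NNReal.mul_rpow,
    ← NNReal.rpow_natCast, ← NNReal.rpow_mul, mul_inv_cancel₀ hi0, NNReal.rpow_one]

lemma factorial_mul_factorial_mul_nnnorm_gcomp_mul_le {x y : A} (hx : gcomp 𝒜 x 0 = 1)
    (hy : gcomp 𝒜 y 0 = 1) {j k : ℕ} (hjk : j + k ≠ 0) (hjkm : j + k ≤ m) :
    (j ! * k ! : ℝ≥0) * ‖gcomp 𝒜 x j * gcomp 𝒜 y k‖₊ ≤
      nnhnorm 𝒜 m x ^ j * nnhnorm 𝒜 m y ^ k := by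
  -- `‖1‖ ≤ 1` need not hold in `A`, so the terms with `j = 0` or `k = 0` are handled exactly.
  rcases Nat.eq_zero_or_pos j with rfl | hj
  · simpa [hx] using factorial_mul_nnnorm_gcomp_le y (by omega) (by omega)
  rcases Nat.eq_zero_or_pos k with rfl | hk
  · simpa [hy] using factorial_mul_nnnorm_gcomp_le x hj (by omega)
  calc (j ! * k ! : ℝ≥0) * ‖gcomp 𝒜 x j * gcomp 𝒜 y k‖₊
      ≤ (j ! * ‖gcomp 𝒜 x j‖₊) * (k ! * ‖gcomp 𝒜 y k‖₊) := by
        rw [mul_mul_mul_comm]; gcongr; exact nnnorm_mul_le _ _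
    _ ≤ nnhnorm 𝒜 m x ^ j * nnhnorm 𝒜 m y ^ k := by
        gcongr <;> exact factorial_mul_nnnorm_gcomp_le _ (by omega) (by omega)

lemma factorial_mul_nnnorm_gcomp_mul_le {x y : A} (hx : gcomp 𝒜 x 0 = 1)
    (hy : gcomp 𝒜 y 0 = 1) {i : ℕ} (hi : 1 ≤ i) (him : i ≤ m) :
    (i ! : ℝ≥0) * ‖gcomp 𝒜 (x * y) i‖₊ ≤ (nnhnorm 𝒜 m x + nnhnorm 𝒜 m y) ^ i := by
  rw [(Commute.all _ _).add_pow', gcomp_mul]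
  calc (i ! : ℝ≥0) * ‖∑ p ∈ antidiagonal i, gcomp 𝒜 x p.1 * gcomp 𝒜 y p.2‖₊
      ≤ ∑ p ∈ antidiagonal i, (i ! : ℝ≥0) * ‖gcomp 𝒜 x p.1 * gcomp 𝒜 y p.2‖₊ := by
        rw [← mul_sum]; gcongr; exact nnnorm_sum_le _ _
    _ ≤ ∑ p ∈ antidiagonal i, i.choose p.1 • (nnhnorm 𝒜 m x ^ p.1 * nnhnorm 𝒜 m y ^ p.2) := by
        refine sum_le_sum fun p hp => ?_
        rw [HasAntidiagonal.mem_antidiagonal] at hp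
        subst hp
        have hfac : ((p.1 + p.2)! : ℝ≥0) = (p.1 + p.2).choose p.1 * (p.1 ! * p.2 !) := by
          rw [← Nat.choose_mul_factorial_mul_factorial (Nat.le_add_right p.1 p.2),
            Nat.add_sub_cancel_left]
          push_cast; ring
        rw [hfac, nsmul_eq_mul, mul_assoc]
        exact mul_le_mul_of_nonneg_left
          (factorial_mul_factorial_mul_nnnorm_gcomp_mul_le hx hy (by omega) him) (by positivity)

lemma nnhnorm_mul_le {x y : A} (hx : gcomp 𝒜 x 0 = 1) (hy : gcomp 𝒜 y 0 = 1) :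
    nnhnorm 𝒜 m (x * y) ≤ nnhnorm 𝒜 m x + nnhnorm 𝒜 m y :=
  nnhnorm_le_iff.2 fun _ hi =>
    factorial_mul_nnnorm_gcomp_mul_le hx hy (mem_Icc.1 hi).1 (mem_Icc.1 hi).2

end HomogeneousNorm

theorem hnorm_is_subadditive_homogeneous_norm_general {A : Type*} [NormedRing A] [NormedAlgebra ℝ A]
    (𝒜 : ℕ → Submodule ℝ A) [GradedAlgebra 𝒜] (m : ℕ)
    (htrunc : ∀ i, m < i → 𝒜 i = ⊥) :
    (∀ x : A, gcomp 𝒜 x 0 = 1 → (hnorm 𝒜 m x = 0 ↔ x = 1)) ∧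
    (∀ (t : ℝ) (x : A), gcomp 𝒜 x 0 = 1 →
      hnorm 𝒜 m (dil 𝒜 m t x) = |t| * hnorm 𝒜 m x) ∧
    (∀ x y : A, gcomp 𝒜 x 0 = 1 → gcomp 𝒜 y 0 = 1 →
      hnorm 𝒜 m (x * y) ≤ hnorm 𝒜 m x + hnorm 𝒜 m y) := by
  refine ⟨fun x hx => ?_, fun t x _ => ?_, fun x y hx hy => ?_⟩
  · rw [← coe_nnhnorm, NNReal.coe_eq_zero, nnhnorm_eq_zero_iff,
      eq_one_iff_gcomp_eq_zero 𝒜 htrunc hx]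
  · rw [← coe_nnhnorm, ← coe_nnhnorm, nnhnorm_dil, NNReal.coe_mul, coe_nnnorm, Real.norm_eq_abs]
  · rw [← coe_nnhnorm, ← coe_nnhnorm, ← coe_nnhnorm]
    exact_mod_cast nnhnorm_mul_le hx hy

/-- `x ↦ max_{i=1..m}(i!|xⁱ|)^{1/i}` is a subadditive homogeneous norm on `T̃⁽ᵐ⁾(V)`:
it vanishes exactly at `1`, is homogeneous for dilations, and is subadditive. -/
theorem hnorm_is_subadditive_homogeneous_norm {A : Type*} [NormedRing A] [NormedAlgebra ℝ A]
    (𝒜 : ℕ → Submodule ℝ A) [GradedAlgebra 𝒜] (m : ℕ) (hm : 1 ≤ m)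
    (htrunc : ∀ i, m < i → 𝒜 i = ⊥) :
    (∀ x : A, gcomp 𝒜 x 0 = 1 → (hnorm 𝒜 m x = 0 ↔ x = 1)) ∧
    (∀ (t : ℝ) (x : A), gcomp 𝒜 x 0 = 1 →
      hnorm 𝒜 m (dil 𝒜 m t x) = |t| * hnorm 𝒜 m x) ∧
    (∀ x y : A, gcomp 𝒜 x 0 = 1 → gcomp 𝒜 y 0 = 1 →
      hnorm 𝒜 m (x * y) ≤ hnorm 𝒜 m x + hnorm 𝒜 m y) :=
  hnorm_is_subadditive_homogeneous_norm_general 𝒜 m htrunc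
end

section
/- The space C^{p-var}(G^m(V)) of continuous G^m(V)-valued paths starting at the identity with finite p-variation is complete with respect to the p-variation distance d_{p-var}. -/
/-!
Evaluating the Cauchy condition on the partitions `{0, t, 1}` shows that the paths, which all
start at the identity, are uniformly Cauchy, so they converge uniformly to a continuous limit `Y`.
On a fixed partition the `p`-variation sum depends continuously on finitely many increments, so
the Cauchy bounds survive the limit and give `d_{p-var}(X k, Y) → 0`. Finiteness of the
`p`-variation of `Y` then follows from the `ℓ^p` triangle inequality on each partition.
-/

open scoped BigOperators

/-- `τ : Fin (n+1) → ℝ` is a partition of `[a,b]`. -/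
def IsPartition {n : ℕ} (τ : Fin (n + 1) → ℝ) (a b : ℝ) : Prop :=
  Monotone τ ∧ τ 0 = a ∧ τ (Fin.last n) = b

/-- Increment `X_{s,t} = X_s⁻¹ * X_t`. -/
def inc {G : Type*} [Group G] (X : ℝ → G) (s t : ℝ) : G := (X s)⁻¹ * X t

/-- Membership in `C^{p-var}(G^m(V))`: a continuous path on `[0,1]` starting at the
identity with finite `p`-variation. -/
def InPvarSpace {G : Type*} [Group G] [MetricSpace G] (p : ℝ) (X : ℝ → G) : Prop :=
  ContinuousOn X (Set.Icc (0:ℝ) 1) ∧ X 0 = 1 ∧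
    ∃ M : ℝ, ∀ (n : ℕ) (τ : Fin (n + 1) → ℝ), IsPartition τ 0 1 →
      ∑ i : Fin n, dist (1 : G) (inc X (τ i.castSucc) (τ i.succ)) ^ p ≤ M

open Filter Set Topology

theorem IsPartition.mem_Icc {n : ℕ} {τ : Fin (n + 1) → ℝ} {a b : ℝ} (hτ : IsPartition τ a b)
    (i : Fin (n + 1)) : τ i ∈ Icc a b :=
  ⟨hτ.2.1 ▸ hτ.1 (Fin.zero_le i), hτ.2.2 ▸ hτ.1 (Fin.le_last i)⟩

theorem isPartition_three {a t b : ℝ} (ht : t ∈ Icc a b) : IsPartition ![a, t, b] a b := by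
  refine ⟨Fin.monotone_iff_le_succ.2 fun i => ?_, rfl, rfl⟩
  fin_cases i
  exacts [ht.1, ht.2]

section IncDistSum

variable {G : Type*} [Group G] [MetricSpace G] {p : ℝ} {n : ℕ} {τ : Fin (n + 1) → ℝ}

/-- `incDistSum p X Y τ ^ (1 / p)` is the `p`-variation distance of `X` and `Y` along `τ`;
`d_{p-var}(X, Y)` is its supremum over partitions. -/
noncomputable def incDistSum (p : ℝ) (X Y : ℝ → G) (τ : Fin (n + 1) → ℝ) : ℝ :=
  ∑ i : Fin n, dist (inc X (τ i.castSucc) (τ i.succ)) (inc Y (τ i.castSucc) (τ i.succ)) ^ p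

theorem incDistSum_nonneg (X Y : ℝ → G) : 0 ≤ incDistSum p X Y τ :=
  Finset.sum_nonneg fun _ _ => Real.rpow_nonneg dist_nonneg p

theorem incDistSum_one_left (X : ℝ → G) :
    incDistSum p 1 X τ = ∑ i : Fin n, dist (1 : G) (inc X (τ i.castSucc) (τ i.succ)) ^ p := by
  simp [incDistSum, inc]

theorem dist_inc_le_incDistSum (hp : 0 < p) (X Y : ℝ → G) (i : Fin n) :
    dist (inc X (τ i.castSucc) (τ i.succ)) (inc Y (τ i.castSucc) (τ i.succ)) ≤
      incDistSum p X Y τ ^ (1 / p) := by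
  rw [one_div, Real.le_rpow_inv_iff_of_pos dist_nonneg (incDistSum_nonneg X Y) hp]
  exact Finset.single_le_sum (f := fun j : Fin n =>
    dist (inc X (τ j.castSucc) (τ j.succ)) (inc Y (τ j.castSucc) (τ j.succ)) ^ p)
    (fun _ _ => Real.rpow_nonneg dist_nonneg p) (Finset.mem_univ i)

theorem incDistSum_rpow_triangle (hp : 1 ≤ p) (X Y Z : ℝ → G) :
    incDistSum p X Z τ ^ (1 / p) ≤ incDistSum p X Y τ ^ (1 / p) + incDistSum p Y Z τ ^ (1 / p) := by
  have : Fact (1 ≤ ENNReal.ofReal p) := ⟨by simpa using ENNReal.ofReal_le_ofReal hp⟩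
  have hq : (ENNReal.ofReal p).toReal = p := ENNReal.toReal_ofReal (by linarith)
  let incs (W : ℝ → G) : PiLp (ENNReal.ofReal p) (fun _ : Fin n => G) :=
    WithLp.toLp _ fun i => inc W (τ i.castSucc) (τ i.succ)
  have hdist (W W' : ℝ → G) : dist (incs W) (incs W') = incDistSum p W W' τ ^ (1 / p) := by
    rw [PiLp.dist_eq_sum (by rw [hq]; linarith), hq]
    rfl
  simpa only [hdist] using dist_triangle (incs X) (incs Y) (incs Z)

theorem tendsto_incDistSum [IsTopologicalGroup G] {ι : Type*} {l : Filter ι} (hp : 0 ≤ p)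
    {X : ι → ℝ → G} {Y : ℝ → G} {s : Set ℝ} (hτ : ∀ i, τ i ∈ s)
    (hXY : ∀ t ∈ s, Tendsto (fun k => X k t) l (𝓝 (Y t))) (Z : ℝ → G) :
    Tendsto (fun k => incDistSum p Z (X k) τ) l (𝓝 (incDistSum p Z Y τ)) :=
  tendsto_finsetSum _ fun _ _ =>
    (tendsto_const_nhds.dist ((hXY _ (hτ _)).inv.mul (hXY _ (hτ _)))).rpow_const (Or.inr hp)

theorem incDistSum_rpow_le_of_tendsto [IsTopologicalGroup G] {ι : Type*} {l : Filter ι}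
    [l.NeBot] (hp : 0 < p) {X : ι → ℝ → G} {Y Z : ℝ → G} {s : Set ℝ} (hτ : ∀ i, τ i ∈ s)
    (hXY : ∀ t ∈ s, Tendsto (fun k => X k t) l (𝓝 (Y t))) {ε : ℝ}
    (hε : ∀ᶠ k in l, incDistSum p Z (X k) τ ^ (1 / p) ≤ ε) :
    incDistSum p Z Y τ ^ (1 / p) ≤ ε :=
  le_of_tendsto ((tendsto_incDistSum hp.le hτ hXY Z).rpow_const (Or.inr (by positivity))) hε

theorem dist_le_incDistSum_three (hp : 0 < p) {X Y : ℝ → G} (hX : X 0 = 1) (hY : Y 0 = 1)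
    (t : ℝ) : dist (X t) (Y t) ≤ incDistSum p X Y ![0, t, 1] ^ (1 / p) := by
  simpa [inc, hX, hY] using dist_inc_le_incDistSum hp X Y (τ := ![0, t, 1]) 0

theorem uniformCauchySeqOn_of_incDistSum_cauchy (hp : 0 < p) {X : ℕ → ℝ → G}
    (hX : ∀ k, X k 0 = 1)
    (hcauchy : ∀ ε > (0 : ℝ), ∃ N : ℕ, ∀ k l, N ≤ k → N ≤ l →
      ∀ (n : ℕ) (τ : Fin (n + 1) → ℝ), IsPartition τ 0 1 →
        incDistSum p (X k) (X l) τ ^ (1 / p) ≤ ε) :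
    UniformCauchySeqOn X atTop (Icc 0 1) := by
  rw [Metric.uniformCauchySeqOn_iff]
  intro ε hε
  obtain ⟨N, hN⟩ := hcauchy (ε / 2) (half_pos hε)
  refine ⟨N, fun k hk l hl t ht => ?_⟩
  calc dist (X k t) (X l t) ≤ incDistSum p (X k) (X l) ![0, t, 1] ^ (1 / p) :=
        dist_le_incDistSum_three hp (hX k) (hX l) t
    _ ≤ ε / 2 := hN k l hk hl 2 _ (isPartition_three ht)
    _ < ε := half_lt_self hε

theorem InPvarSpace.of_incDistSum_le (hp : 1 ≤ p) {X Y : ℝ → G} (hX : InPvarSpace p X)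
    (hY : ContinuousOn Y (Icc 0 1)) (hY0 : Y 0 = 1) {C : ℝ}
    (hC : ∀ (n : ℕ) (τ : Fin (n + 1) → ℝ), IsPartition τ 0 1 →
      incDistSum p X Y τ ^ (1 / p) ≤ C) :
    InPvarSpace p Y := by
  obtain ⟨-, -, M, hM⟩ := hX
  have hp0 : 0 < p := by linarith
  refine ⟨hY, hY0, (M ^ (1 / p) + C) ^ p, fun n τ hτ => ?_⟩
  have hXM : incDistSum p 1 X τ ^ (1 / p) ≤ M ^ (1 / p) :=
    Real.rpow_le_rpow (incDistSum_nonneg 1 X) (incDistSum_one_left X ▸ hM n τ hτ)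
      (by positivity)
  rw [← incDistSum_one_left, ← Real.rpow_inv_rpow (incDistSum_nonneg 1 Y) hp0.ne', ← one_div]
  refine Real.rpow_le_rpow (Real.rpow_nonneg (incDistSum_nonneg 1 Y) _) ?_ hp0.le
  exact (incDistSum_rpow_triangle hp 1 X Y).trans (add_le_add hXM (hC n τ hτ))

end IncDistSum

theorem pvar_space_complete_general {G : Type*} [Group G] [MetricSpace G]
    [CompleteSpace G] [IsTopologicalGroup G]
    (p : ℝ) (hp : 1 ≤ p)
    (X : ℕ → ℝ → G) (hX : ∀ k, InPvarSpace p (X k))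
    (hcauchy : ∀ ε > (0:ℝ), ∃ N : ℕ, ∀ k l, N ≤ k → N ≤ l →
      ∀ (n : ℕ) (τ : Fin (n + 1) → ℝ), IsPartition τ 0 1 →
        (∑ i : Fin n, dist (inc (X k) (τ i.castSucc) (τ i.succ))
            (inc (X l) (τ i.castSucc) (τ i.succ)) ^ p) ^ (1 / p) ≤ ε) :
    ∃ Xlim : ℝ → G, InPvarSpace p Xlim ∧
      ∀ ε > (0:ℝ), ∃ N : ℕ, ∀ k, N ≤ k →
        ∀ (n : ℕ) (τ : Fin (n + 1) → ℝ), IsPartition τ 0 1 →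
          (∑ i : Fin n, dist (inc (X k) (τ i.castSucc) (τ i.succ))
              (inc Xlim (τ i.castSucc) (τ i.succ)) ^ p) ^ (1 / p) ≤ ε := by
  have hp0 : 0 < p := by linarith
  have hX0 (k : ℕ) : X k 0 = 1 := (hX k).2.1
  have hunif : UniformCauchySeqOn X atTop (Icc 0 1) :=
    uniformCauchySeqOn_of_incDistSum_cauchy hp0 hX0 hcauchy
  choose! Y hY using fun t (ht : t ∈ Icc (0 : ℝ) 1) =>
    cauchySeq_tendsto_of_complete (hunif.cauchySeq ht)
  have hY0 : Y 0 = 1 :=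
    tendsto_nhds_unique (hY 0 ⟨le_rfl, zero_le_one⟩) (by simp [hX0])
  have hYcont : ContinuousOn Y (Icc 0 1) :=
    (hunif.tendstoUniformlyOn_of_tendsto hY).continuousOn
      (Frequently.of_forall fun k => (hX k).1)
  have hconv : ∀ ε > (0 : ℝ), ∃ N : ℕ, ∀ k, N ≤ k →
      ∀ (n : ℕ) (τ : Fin (n + 1) → ℝ), IsPartition τ 0 1 →
        incDistSum p (X k) Y τ ^ (1 / p) ≤ ε := fun ε hε =>
    (hcauchy ε hε).imp fun N hN k hk n τ hτ =>
      incDistSum_rpow_le_of_tendsto hp0 hτ.mem_Icc hY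
        (eventually_atTop.2 ⟨N, fun l hl => hN k l hk hl n τ hτ⟩)
  obtain ⟨N, hN⟩ := hconv 1 one_pos
  exact ⟨Y, (hX N).of_incDistSum_le hp hYcont hY0 (hN N le_rfl), hconv⟩

/-- The space `C^{p-var}(G^m(V))` is complete for the `p`-variation distance
`d_{p-var}`: every Cauchy sequence (Cauchy in the sense that the `p`-variation sums of
the differences are eventually uniformly small over all partitions) converges in
`d_{p-var}` to an element of the space. Here `G` is a complete metric topological
group with left-invariant metric, as is the free nilpotent group `G^m(V)` with the
distance of a homogeneous norm. -/
theorem pvar_space_complete {G : Type*} [Group G] [MetricSpace G]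
    [CompleteSpace G] [IsTopologicalGroup G]
    (hleft : ∀ a x y : G, dist (a * x) (a * y) = dist x y)
    (p : ℝ) (hp : 1 ≤ p)
    (X : ℕ → ℝ → G) (hX : ∀ k, InPvarSpace p (X k))
    (hcauchy : ∀ ε > (0:ℝ), ∃ N : ℕ, ∀ k l, N ≤ k → N ≤ l →
      ∀ (n : ℕ) (τ : Fin (n + 1) → ℝ), IsPartition τ 0 1 →
        (∑ i : Fin n, dist (inc (X k) (τ i.castSucc) (τ i.succ))
            (inc (X l) (τ i.castSucc) (τ i.succ)) ^ p) ^ (1 / p) ≤ ε) :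
    ∃ Xlim : ℝ → G, InPvarSpace p Xlim ∧
      ∀ ε > (0:ℝ), ∃ N : ℕ, ∀ k, N ≤ k →
        ∀ (n : ℕ) (τ : Fin (n + 1) → ℝ), IsPartition τ 0 1 →
          (∑ i : Fin n, dist (inc (X k) (τ i.castSucc) (τ i.succ))
              (inc Xlim (τ i.castSucc) (τ i.succ)) ^ p) ^ (1 / p) ≤ ε :=
  pvar_space_complete_general p hp X hX hcauchy
end
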